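/- Let ρ be a gauge and (x_ε) a net of reals with |x_ε| ≤ M for all ε ≤ ε₀, where M ∈ ℝ_{>0}. Then for every q ∈ ℕ there exists a ρ-moderate net of naturals (M_ε) such that for all nets of naturals (N_ε) with N_ε ≥ M_ε eventually, | Σ_{n=0}^{N_ε} x_ε^n / n! − e^{x_ε} | ≤ ρ_ε^q for ε sufficiently small. In other words, the exponential hyperseries Σ_{n∈ℕ} x^n/n! converges in the sharp topology to e^x for finite x. -/

import Mathlib

open Filter Finset Topology

def IsGauge (ρ : ℝ → ℝ) : Prop :=
  (∀ ε : ℝ, 0 < ε → ε ≤ 1 → 0 < ρ ε ∧ ρ ε ≤ 1) ∧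
    Tendsto ρ (nhdsWithin 0 (Set.Ioi 0)) (nhds 0)

def EvSmall (P : ℝ → Prop) : Prop := ∃ ε₀ : ℝ, 0 < ε₀ ∧ ∀ ε : ℝ, 0 < ε → ε ≤ ε₀ → P ε

def Moderate (ρ : ℝ → ℝ) (x : ℝ → ℝ) : Prop :=
  ∃ N : ℕ, EvSmall (fun ε => |x ε| ≤ ρ ε ^ (-(N : ℤ)))

/-! For `|x| ≤ M` every term obeys `|x^n/n!| ≤ ((2M)^n/n!) 2^{-n} ≤ e^{2M} 2^{-n}`, so truncating
the exponential series after `n` terms costs at most `2e^{2M} 2^{-n}`, uniformly in `ε`. As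
`2^{-n} < 1/n`, any `N_ε ≥ 2e^{2M} ρ_ε^{-q}` makes the error at most `ρ_ε^q`, and this threshold
is `ρ`-moderate because `ρ_ε → 0`. -/

theorem evSmall_iff {P : ℝ → Prop} : EvSmall P ↔ ∀ᶠ ε in 𝓝[>] 0, P ε := by
  simp [EvSmall, (nhdsGT_basis_Ioc (0 : ℝ)).eventually_iff, and_imp]

theorem abs_pow_div_factorial_le {x M : ℝ} (hx : |x| ≤ M) (n : ℕ) :
    |x ^ n / n.factorial| ≤ Real.exp (2 * M) * (1 / 2) ^ n := by
  have hM : 0 ≤ M := (abs_nonneg x).trans hx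
  calc |x ^ n / n.factorial| = |x| ^ n / n.factorial := by
        rw [abs_div, abs_pow, Nat.abs_cast]
    _ ≤ M ^ n / n.factorial := by gcongr
    _ = (2 * M) ^ n / n.factorial * (1 / 2) ^ n := by
        rw [mul_pow, div_mul_eq_mul_div, mul_right_comm, ← mul_pow]; norm_num
    _ ≤ Real.exp (2 * M) * (1 / 2) ^ n := by
        gcongr; exact Real.pow_div_factorial_le_exp _ (by positivity) n

theorem abs_sum_range_pow_div_factorial_sub_exp_le {x M : ℝ} (hx : |x| ≤ M) (n : ℕ) :
    |∑ m ∈ range n, x ^ m / m.factorial - Real.exp x| ≤ 2 * Real.exp (2 * M) * (1 / 2) ^ n := by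
  have htail : Real.exp x - ∑ m ∈ range n, x ^ m / m.factorial
      = ∑' m, x ^ (m + n) / (m + n).factorial := by
    rw [Real.exp_eq_exp_ℝ, congrFun NormedSpace.exp_eq_tsum_div x,
      ← (Real.summable_pow_div_factorial x).sum_add_tsum_nat_add n, add_sub_cancel_left]
  have hgeom : HasSum (fun m : ℕ => Real.exp (2 * M) * (1 / 2) ^ (m + n))
      (2 * Real.exp (2 * M) * (1 / 2) ^ n) := by
    have h := hasSum_geometric_two.mul_left (Real.exp (2 * M) * (1 / 2) ^ n)
    rw [mul_comm _ (2 : ℝ), ← mul_assoc] at h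
    exact h.congr_fun fun m => by ring
  rw [abs_sub_comm, htail]
  exact tsum_of_norm_bounded hgeom fun m =>
    (Real.norm_eq_abs _).trans_le (abs_pow_div_factorial_le hx (m + n))

theorem mul_half_pow_le_of_div_le {C r : ℝ} {n : ℕ} (hr : 0 < r) (h : C / r ≤ n) :
    C * (1 / 2) ^ n ≤ r := by
  have hn : C / r < 2 ^ n := h.trans_lt (mod_cast n.lt_two_pow_self)
  rw [div_lt_iff₀ hr] at hn
  rw [one_div_pow, ← div_eq_mul_one_div, div_le_iff₀ (by positivity)]
  linarith

namespace IsGauge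

variable {ρ : ℝ → ℝ}

theorem eventually_pos (hρ : IsGauge ρ) : ∀ᶠ ε in 𝓝[>] 0, 0 < ρ ε :=
  evSmall_iff.1 ⟨1, one_pos, fun ε hε hε1 => (hρ.1 ε hε hε1).1⟩

theorem eventually_le_one (hρ : IsGauge ρ) : ∀ᶠ ε in 𝓝[>] 0, ρ ε ≤ 1 :=
  evSmall_iff.1 ⟨1, one_pos, fun ε hε hε1 => (hρ.1 ε hε hε1).2⟩

theorem eventually_le (hρ : IsGauge ρ) {c : ℝ} (hc : 0 < c) : ∀ᶠ ε in 𝓝[>] 0, ρ ε ≤ c :=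
  hρ.2.eventually (ge_mem_nhds hc)

theorem moderate_natCeil_div_pow (hρ : IsGauge ρ) {C : ℝ} (hC : 0 ≤ C) (q : ℕ) :
    Moderate ρ (fun ε => (⌈C / ρ ε ^ q⌉₊ : ℝ)) := by
  refine ⟨q + 1, evSmall_iff.2 ?_⟩
  filter_upwards [hρ.eventually_pos, hρ.eventually_le_one, hρ.eventually_le (c := (C + 1)⁻¹)
    (by positivity)] with ε hpos hle_one hle
  have hpow_pos : 0 < ρ ε ^ q := pow_pos hpos q
  have hpow_le_one : ρ ε ^ q ≤ 1 := pow_le_one₀ hpos.le hle_one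
  rw [Nat.abs_cast, zpow_neg, zpow_natCast, pow_succ]
  calc (⌈C / ρ ε ^ q⌉₊ : ℝ) ≤ C / ρ ε ^ q + 1 := (Nat.ceil_lt_add_one (by positivity)).le
    _ ≤ (C + 1) / ρ ε ^ q := by
        rw [add_div]; gcongr; exact (one_le_div hpow_pos).2 hpow_le_one
    _ ≤ (ρ ε)⁻¹ / ρ ε ^ q := by gcongr; exact (le_inv_comm₀ hpos (by positivity)).1 hle
    _ = (ρ ε ^ q * ρ ε)⁻¹ := by rw [mul_inv, div_eq_mul_inv, mul_comm]

end IsGauge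

theorem exponential_hyperseries_general (ρ : ℝ → ℝ) (hρ : IsGauge ρ)
    (x : ℝ → ℝ) (M : ℝ) (ε₀ : ℝ) (hε₀ : 0 < ε₀)
    (hx : ∀ ε : ℝ, 0 < ε → ε ≤ ε₀ → |x ε| ≤ M) :
    ∀ q : ℕ, ∃ Mn : ℝ → ℕ, Moderate ρ (fun ε => (Mn ε : ℝ)) ∧
      ∀ N : ℝ → ℕ, EvSmall (fun ε => Mn ε ≤ N ε) →
        EvSmall (fun ε =>
          |∑ n ∈ Finset.range (N ε + 1), x ε ^ n / n.factorial - Real.exp (x ε)| ≤ ρ ε ^ q) := by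
  intro q
  set C := 2 * Real.exp (2 * M)
  refine ⟨fun ε => ⌈C / ρ ε ^ q⌉₊, hρ.moderate_natCeil_div_pow (by positivity) q, fun N hN => ?_⟩
  rw [evSmall_iff] at hN ⊢
  filter_upwards [evSmall_iff.1 ⟨ε₀, hε₀, hx⟩, hN, hρ.eventually_pos] with ε hxε hNε hpos
  calc _ ≤ C * (1 / 2) ^ (N ε + 1) := abs_sum_range_pow_div_factorial_sub_exp_le hxε _
    _ ≤ ρ ε ^ q := by
        refine mul_half_pow_le_of_div_le (pow_pos hpos q) ?_
        exact (Nat.ceil_le.1 hNε).trans (by push_cast; linarith)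

/-- Exponential hyperseries: `Σ x^n/n!` converges sharply to `e^x` for finite `x`. -/
theorem exponential_hyperseries (ρ : ℝ → ℝ) (hρ : IsGauge ρ)
    (x : ℝ → ℝ) (M : ℝ) (hM : 0 < M) (ε₀ : ℝ) (hε₀ : 0 < ε₀)
    (hx : ∀ ε : ℝ, 0 < ε → ε ≤ ε₀ → |x ε| ≤ M) :
    ∀ q : ℕ, ∃ Mn : ℝ → ℕ, Moderate ρ (fun ε => (Mn ε : ℝ)) ∧
      ∀ N : ℝ → ℕ, EvSmall (fun ε => Mn ε ≤ N ε) →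
        EvSmall (fun ε =>
          |∑ n ∈ Finset.range (N ε + 1), x ε ^ n / n.factorial - Real.exp (x ε)| ≤ ρ ε ^ q) :=
  exponential_hyperseries_general ρ hρ x M ε₀ hε₀ hx
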